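/- arXiv:1812.04937 — 2 statements merged into one kernel-verified Lean document; each statement's English description precedes it below -/
import Mathlib

section
/- Let (X, 0, f) and (Y, 0, g) be pointed modules with smash structure map h on X × Y. Let x ∈ X be nonzero with f^[n] x = 0 for some n, and let y ∈ Y be nonzero with g^[k] y ≠ 0 for every k. Then sInf {n : ℕ | h^[n] (x, y) = (0, 0)} = sInf {n : ℕ | f^[n] x = 0}. (Equivalently, when M is nilpotent and N is not, depth (x, y) = depth x.) -/
/-!
Before `x` dies, both coordinates of `h^[n] (x, y)` are nonzero, so `h` simply acts as
`f × g` on the orbit of `(x, y)`. Since `y` never dies, the orbit of `(x, y)` is collapsed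
to `(0, 0)` exactly at the first step at which `f^[n] x = 0`.
-/

section Smash

variable {X Y : Type*} [Zero X] [Zero Y] [DecidableEq X] [DecidableEq Y]
  {f : X → X} {g : Y → Y} {h : X × Y → X × Y}

theorem smash_iterate_eq_of_forall_le
    (hh : ∀ p : X × Y, h p = if f p.1 ≠ 0 ∧ g p.2 ≠ 0 then (f p.1, g p.2) else (0, 0))
    {x : X} {y : Y} {n : ℕ} (hne : ∀ m ≤ n, f^[m] x ≠ 0 ∧ g^[m] y ≠ 0) :
    h^[n] (x, y) = (f^[n] x, g^[n] y) := by
  induction n with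
  | zero => rfl
  | succ n ih =>
    have hstep : f (f^[n] x) ≠ 0 ∧ g (g^[n] y) ≠ 0 := by
      simpa only [Function.iterate_succ_apply'] using hne (n + 1) le_rfl
    rw [Function.iterate_succ_apply', ih fun m hm => hne m (by omega), hh, if_pos hstep,
      Function.iterate_succ_apply', Function.iterate_succ_apply']

theorem smash_apply_of_fst_eq_zero
    (hh : ∀ p : X × Y, h p = if f p.1 ≠ 0 ∧ g p.2 ≠ 0 then (f p.1, g p.2) else (0, 0))
    {a : X} (b : Y) (ha : f a = 0) : h (a, b) = (0, 0) := by
  rw [hh, if_neg (fun hab => hab.1 ha)]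

end Smash

theorem smash_depth_left_general {X Y : Type*} [Zero X] [Zero Y]
    [DecidableEq X] [DecidableEq Y]
    (f : X → X) (g : Y → Y)
    (h : X × Y → X × Y)
    (hh : ∀ p : X × Y,
      h p = if f p.1 ≠ 0 ∧ g p.2 ≠ 0 then (f p.1, g p.2) else (0, 0))
    (x : X) (y : Y) (hx : x ≠ 0)
    (hxn : ∃ n : ℕ, f^[n] x = 0) (hyn : ∀ k : ℕ, g^[k] y ≠ 0) :
    sInf {n : ℕ | h^[n] (x, y) = (0, 0)} = sInf {n : ℕ | f^[n] x = 0} := by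
  set N := sInf {n : ℕ | f^[n] x = 0}
  have hN : f^[N] x = 0 := Nat.sInf_mem hxn
  have hlt : ∀ m < N, f^[m] x ≠ 0 := fun m hm => Nat.notMem_of_lt_sInf hm
  have horbit : ∀ n < N, h^[n] (x, y) = (f^[n] x, g^[n] y) := fun n hn =>
    smash_iterate_eq_of_forall_le hh fun m hm => ⟨hlt m (by omega), hyn m⟩
  obtain ⟨M, hM⟩ : ∃ M, N = M + 1 :=
    Nat.exists_eq_succ_of_ne_zero fun h0 => hx (by simpa [h0] using hN)
  have hzero : h^[N] (x, y) = (0, 0) := by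
    rw [hM, Function.iterate_succ_apply'] at hN ⊢
    rw [horbit M (by omega)]
    exact smash_apply_of_fst_eq_zero hh _ hN
  refine IsLeast.csInf_eq ⟨hzero, fun n hn => not_lt.1 fun hnN => hlt n hnN ?_⟩
  exact congrArg Prod.fst ((horbit n hnN).symm.trans hn)

/-- **Proposition (depth in the smash product, mixed case).**
Let `(X, 0, f)` and `(Y, 0, g)` be pointed modules with smash structure map `h` on
`X × Y`.  If `x ≠ 0` is annihilated by some iterate of `f`, while `y ≠ 0` is
annihilated by no iterate of `g`, then the least `n` with `h^[n] (x, y) = (0, 0)`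
equals the least `n` with `f^[n] x = 0`; equivalently, when `M` is nilpotent and
`N` is not, `depth (x, y) = depth x`. -/
theorem smash_depth_left {X Y : Type*} [Zero X] [Zero Y]
    [DecidableEq X] [DecidableEq Y]
    (f : X → X) (g : Y → Y) (hf : f 0 = 0) (hg : g 0 = 0)
    (h : X × Y → X × Y)
    (hh : ∀ p : X × Y,
      h p = if f p.1 ≠ 0 ∧ g p.2 ≠ 0 then (f p.1, g p.2) else (0, 0))
    (x : X) (y : Y) (hx : x ≠ 0) (hy : y ≠ 0)
    (hxn : ∃ n : ℕ, f^[n] x = 0) (hyn : ∀ k : ℕ, g^[k] y ≠ 0) :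
    sInf {n : ℕ | h^[n] (x, y) = (0, 0)} = sInf {n : ℕ | f^[n] x = 0} :=
  smash_depth_left_general f g h hh x y hx hxn hyn
end

section
/- Let X and Y be finite types with basepoints 0 and maps f : X → X, g : Y → Y fixing the basepoints, with both f and g nilpotent and both graphs Γ_X, Γ_Y connected (so Γ_X, Γ_Y are rooted trees). Let h be the smash structure map on X × Y. Then the graph of the smash product, with vertex set {(x, y) : x ≠ 0 and y ≠ 0} and the equivalence relation generated by the pairs (p, h p) for h p ≠ (0,0), has exactly (card {x : X // x ≠ 0}) + (card {y : Y // y ≠ 0}) − 1 equivalence classes. (Γ_{M ∧ N} consists of dim M + dim N − 1 rooted trees.) -/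
/-!
The edges `z → F z` inside a predicate `p` form a forest once every orbit of `F` eventually
leaves `p`: each tree is rooted at the last point of its orbits inside `p`, a point `z` with
`p z` and `¬ p (F z)`, so the components are counted by these roots. A connected nilpotent
`Γ_X` thus has a single root `x₀` (`x₀ ≠ 0 = f x₀`), and likewise `y₀` for `Y`. The smash
structure map is again nilpotent on nonzero pairs, and its roots are the pairs with `f x = 0`
or `g y = 0`, i.e. `{x₀} × Y* ∪ X* × {y₀}` where `X*`, `Y*` are the nonzero elements, a set
of size `|X*| + |Y*| - 1`.
-/

namespace Function

variable {Z : Type*} {p : Z → Prop} {F : Z → Z}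

open scoped Classical in
noncomputable def exitTime (hF : ∀ z, ∃ n, ¬ p (F^[n] z)) (z : Z) : ℕ := Nat.find (hF z)

/-- For `p z`, this is the last point of the orbit of `z` inside `p`. -/
noncomputable def forestRoot (hF : ∀ z, ∃ n, ¬ p (F^[n] z)) (z : Z) : Z :=
  F^[exitTime hF (F z)] z

section
variable (hF : ∀ z, ∃ n, ¬ p (F^[n] z)) {z : Z}

theorem exitTime_eq_zero : exitTime hF z = 0 ↔ ¬ p z := by
  simp [exitTime]

open scoped Classical in
theorem exitTime_eq_succ (hz : p z) : exitTime hF z = exitTime hF (F z) + 1 :=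
  Nat.find_comp_succ _ (hF (F z)) (not_not.2 hz)

theorem not_iterate_exitTime (z : Z) : ¬ p (F^[exitTime hF z] z) := by
  classical exact Nat.find_spec (hF z)

theorem forestRoot_of_not (h : ¬ p (F z)) : forestRoot hF z = z := by
  rw [forestRoot, (exitTime_eq_zero hF).2 h, iterate_zero_apply]

theorem forestRoot_apply (h : p (F z)) : forestRoot hF (F z) = forestRoot hF z := by
  rw [forestRoot, forestRoot, exitTime_eq_succ hF h, ← iterate_succ_apply]

theorem not_apply_forestRoot (z : Z) : ¬ p (F (forestRoot hF z)) := by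
  rw [forestRoot, ← iterate_succ_apply' F, iterate_succ_apply]
  exact not_iterate_exitTime hF (F z)

theorem forestRoot_mem (hz : p z) : p (forestRoot hF z) := by
  classical
  rw [forestRoot]
  rcases hn : exitTime hF (F z) with _ | n
  · exact hz
  · have : n < Nat.find (hF (F z)) := by rw [← exitTime, hn]; omega
    exact not_not.1 (Nat.find_min (hF (F z)) this)

end

section
variable {R : {z // p z} → {z // p z} → Prop}

theorem eqvGen_forestRoot (hF : ∀ z, ∃ n, ¬ p (F^[n] z))
    (hR : ∀ a b, R a b ↔ p (F a) ∧ (b : Z) = F a) (a : {z // p z}) :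
    Relation.EqvGen R a ⟨forestRoot hF a, forestRoot_mem hF a.2⟩ := by
  obtain ⟨z, hz⟩ := a
  induction hn : exitTime hF (F z) generalizing z with
  | zero =>
    have hroot : (⟨forestRoot hF z, forestRoot_mem hF hz⟩ : {z // p z}) = ⟨z, hz⟩ :=
      Subtype.ext (forestRoot_of_not hF ((exitTime_eq_zero hF).1 hn))
    rw [hroot]
    exact .refl _
  | succ n ih =>
    have hFz : p (F z) := by
      by_contra h
      rw [(exitTime_eq_zero hF).2 h] at hn
      omega
    have hroot : (⟨forestRoot hF z, forestRoot_mem hF hz⟩ : {z // p z}) =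
        ⟨forestRoot hF (F z), forestRoot_mem hF hFz⟩ :=
      Subtype.ext (forestRoot_apply hF hFz).symm
    rw [hroot]
    refine .trans _ ⟨F z, hFz⟩ _ (.rel _ _ ((hR _ _).2 ⟨hFz, rfl⟩)) (ih _ hFz ?_)
    rw [exitTime_eq_succ hF hFz] at hn
    omega

theorem forestRoot_eq_of_eqvGen (hF : ∀ z, ∃ n, ¬ p (F^[n] z))
    (hR : ∀ a b, R a b ↔ p (F a) ∧ (b : Z) = F a) {a b : {z // p z}}
    (hab : Relation.EqvGen R a b) :
    forestRoot hF a = forestRoot hF b := by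
  induction hab with
  | rel a b hab =>
    obtain ⟨hFa, hb⟩ := (hR a b).1 hab
    rw [hb, forestRoot_apply hF hFa]
  | refl => rfl
  | symm _ _ _ ih => exact ih.symm
  | trans _ _ _ _ _ ih₁ ih₂ => exact ih₁.trans ih₂

theorem card_quot_eqvGen_eq_card_roots (hF : ∀ z, ∃ n, ¬ p (F^[n] z))
    (hR : ∀ a b, R a b ↔ p (F a) ∧ (b : Z) = F a) :
    Nat.card (Quot (Relation.EqvGen R)) = Nat.card {z // p z ∧ ¬ p (F z)} :=
  Nat.card_congr
    { toFun := Quot.lift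
        (fun a => ⟨forestRoot hF a, forestRoot_mem hF a.2, not_apply_forestRoot hF a⟩)
        (fun _ _ hab => Subtype.ext (forestRoot_eq_of_eqvGen hF hR hab))
      invFun := fun r => Quot.mk _ ⟨r, r.2.1⟩
      left_inv := Quot.ind fun a => (Quot.sound (eqvGen_forestRoot hF hR a)).symm
      right_inv := fun r => Subtype.ext (forestRoot_of_not hF r.2.2) }

theorem exists_forall_root_iff_eq_of_card_eq_one (hF : ∀ z, ∃ n, ¬ p (F^[n] z))
    (hR : ∀ a b, R a b ↔ p (F a) ∧ (b : Z) = F a)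
    (hconn : Nat.card (Quot (Relation.EqvGen R)) = 1) :
    ∃ r, ∀ z, p z ∧ ¬ p (F z) ↔ z = r := by
  rw [card_quot_eqvGen_eq_card_roots hF hR, Nat.card_eq_one_iff_exists] at hconn
  obtain ⟨r, hr⟩ := hconn
  exact ⟨r, fun z => ⟨fun hz => congrArg Subtype.val (hr ⟨z, hz⟩), fun hz => hz ▸ r.2⟩⟩

end

theorem exists_not_iterate_of_factor {W : Type*} {q : W → Prop} {G : W → W} (π : Z → W)
    (hπ : ∀ z, p z → q (π z)) (hcomm : ∀ z, p z → p (F z) → π (F z) = G (π z))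
    (hG : ∀ w, ∃ n, ¬ q (G^[n] w)) (z : Z) : ∃ n, ¬ p (F^[n] z) := by
  obtain ⟨n, hn⟩ := hG (π z)
  induction n generalizing z with
  | zero => exact ⟨0, fun hz => hn (hπ z hz)⟩
  | succ n ih =>
    by_cases hz : p z ∧ p (F z)
    · obtain ⟨m, hm⟩ := ih (F z) (by rwa [hcomm z hz.1 hz.2, ← iterate_succ_apply])
      exact ⟨m + 1, hm⟩
    · rcases not_and_or.1 hz with h | h
      exacts [⟨0, h⟩, ⟨1, h⟩]

end Function

namespace Set

theorem ncard_singleton_prod_union_prod_singleton {α β : Type*} {s : Set α} {t : Set β}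
    {a : α} {b : β} (hs : s.Finite) (ht : t.Finite) (ha : a ∈ s) (hb : b ∈ t) :
    ({a} ×ˢ t ∪ s ×ˢ {b}).ncard = s.ncard + t.ncard - 1 := by
  have hinter : {a} ×ˢ t ∩ s ×ˢ {b} = {(a, b)} := by
    rw [prod_inter_prod, singleton_inter_of_mem ha, inter_singleton_of_mem hb,
      singleton_prod_singleton]
  have := ncard_union_add_ncard_inter ({a} ×ˢ t) (s ×ˢ {b}) ((finite_singleton a).prod ht)
    (hs.prod (finite_singleton b))
  rw [hinter, ncard_singleton, ncard_prod, ncard_prod, ncard_singleton, ncard_singleton] at this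
  have := (ncard_pos hs).2 ⟨a, ha⟩
  omega

end Set

section Smash

variable {X Y : Type*} [Zero X] [Zero Y] [DecidableEq X] [DecidableEq Y]
  {f : X → X} {g : Y → Y} {h : X × Y → X × Y}

theorem smash_fst_ne_zero_and_snd_ne_zero_iff
    (hh : ∀ p : X × Y, h p = if f p.1 ≠ 0 ∧ g p.2 ≠ 0 then (f p.1, g p.2) else (0, 0))
    (q : X × Y) : (h q).1 ≠ 0 ∧ (h q).2 ≠ 0 ↔ f q.1 ≠ 0 ∧ g q.2 ≠ 0 := by
  rw [hh]
  split_ifs with hq <;> simp [hq]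

theorem smash_ne_zero_iff
    (hh : ∀ p : X × Y, h p = if f p.1 ≠ 0 ∧ g p.2 ≠ 0 then (f p.1, g p.2) else (0, 0))
    (q : X × Y) : h q ≠ (0, 0) ↔ (h q).1 ≠ 0 ∧ (h q).2 ≠ 0 := by
  rw [hh]
  split_ifs with hq <;> simp [hq]

end Smash

theorem smash_tree_tree_components_general {X Y : Type*} [Fintype X] [Fintype Y]
    [Zero X] [Zero Y] [DecidableEq X] [DecidableEq Y]
    (f : X → X) (g : Y → Y)
    (hfnil : ∀ x : X, ∃ n : ℕ, f^[n] x = 0)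
    (hgnil : ∀ y : Y, ∃ n : ℕ, g^[n] y = 0)
    (hXconn : Nat.card (Quot (Relation.EqvGen
      (fun x y : {x : X // x ≠ 0} => f (x : X) ≠ 0 ∧ (y : X) = f (x : X)))) = 1)
    (hYconn : Nat.card (Quot (Relation.EqvGen
      (fun x y : {y : Y // y ≠ 0} => g (x : Y) ≠ 0 ∧ (y : Y) = g (x : Y)))) = 1)
    (h : X × Y → X × Y)
    (hh : ∀ p : X × Y,
      h p = if f p.1 ≠ 0 ∧ g p.2 ≠ 0 then (f p.1, g p.2) else (0, 0)) :
    Nat.card (Quot (Relation.EqvGen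
      (fun p q : {p : X × Y // p.1 ≠ 0 ∧ p.2 ≠ 0} =>
        h (p : X × Y) ≠ (0, 0) ∧ (q : X × Y) = h (p : X × Y)))) =
      Nat.card {x : X // x ≠ 0} + Nat.card {y : Y // y ≠ 0} - 1 := by
  have hfesc : ∀ x, ∃ n, ¬ f^[n] x ≠ 0 := fun x => (hfnil x).imp fun _ => not_not_intro
  have hgesc : ∀ y, ∃ n, ¬ g^[n] y ≠ 0 := fun y => (hgnil y).imp fun _ => not_not_intro
  obtain ⟨x₀, hx₀⟩ :=
    Function.exists_forall_root_iff_eq_of_card_eq_one hfesc (fun _ _ => Iff.rfl) hXconn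
  obtain ⟨y₀, hy₀⟩ :=
    Function.exists_forall_root_iff_eq_of_card_eq_one hgesc (fun _ _ => Iff.rfl) hYconn
  have hesc := Function.exists_not_iterate_of_factor
    (p := fun q : X × Y => q.1 ≠ 0 ∧ q.2 ≠ 0) (q := fun x : X => x ≠ 0) (F := h) (G := f)
    Prod.fst (fun _ hq => hq.1)
    (fun q _ hhq => by rw [hh, if_pos ((smash_fst_ne_zero_and_snd_ne_zero_iff hh q).1 hhq)])
    hfesc
  rw [Function.card_quot_eqvGen_eq_card_roots hesc
    (fun a _ => and_congr_left' (smash_ne_zero_iff hh a))]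
  have hroots : Nat.card {q : X × Y // (q.1 ≠ 0 ∧ q.2 ≠ 0) ∧ ¬ ((h q).1 ≠ 0 ∧ (h q).2 ≠ 0)} =
      Nat.card ↥({x₀} ×ˢ {y : Y | y ≠ 0} ∪ {x : X | x ≠ 0} ×ˢ {y₀}) := by
    refine Nat.card_congr (Equiv.subtypeEquivRight fun q => ?_)
    simp only [smash_fst_ne_zero_and_snd_ne_zero_iff hh, Set.mem_union, Set.mem_prod,
      Set.mem_singleton_iff, Set.mem_ofPred_eq, ← hx₀, ← hy₀]
    tauto
  rw [hroots, Nat.card_coe_set_eq, Set.ncard_singleton_prod_union_prod_singleton (Set.toFinite _)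
    (Set.toFinite _) ((hx₀ x₀).2 rfl).1 ((hy₀ y₀).2 rfl).1]
  rfl

/-- **Proposition (components of the smash product of two rooted trees).**
Let `(X, 0, f)` and `(Y, 0, g)` be finite pointed modules with `f`, `g` nilpotent
and graphs `Γ_X`, `Γ_Y` connected (rooted trees).  Then the graph of the smash
product, on the vertex set of nonzero pairs with the equivalence relation
generated by `(p, h p)` for `h p ≠ (0,0)`, has exactly
`card {x // x ≠ 0} + card {y // y ≠ 0} - 1` equivalence classes:
`Γ_{M ∧ N}` consists of `dim M + dim N - 1` rooted trees. -/
theorem smash_tree_tree_components {X Y : Type*} [Fintype X] [Fintype Y]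
    [Zero X] [Zero Y] [DecidableEq X] [DecidableEq Y]
    (f : X → X) (g : Y → Y) (hf : f 0 = 0) (hg : g 0 = 0)
    (hfnil : ∀ x : X, ∃ n : ℕ, f^[n] x = 0)
    (hgnil : ∀ y : Y, ∃ n : ℕ, g^[n] y = 0)
    (hXconn : Nat.card (Quot (Relation.EqvGen
      (fun x y : {x : X // x ≠ 0} => f (x : X) ≠ 0 ∧ (y : X) = f (x : X)))) = 1)
    (hYconn : Nat.card (Quot (Relation.EqvGen
      (fun x y : {y : Y // y ≠ 0} => g (x : Y) ≠ 0 ∧ (y : Y) = g (x : Y)))) = 1)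
    (h : X × Y → X × Y)
    (hh : ∀ p : X × Y,
      h p = if f p.1 ≠ 0 ∧ g p.2 ≠ 0 then (f p.1, g p.2) else (0, 0)) :
    Nat.card (Quot (Relation.EqvGen
      (fun p q : {p : X × Y // p.1 ≠ 0 ∧ p.2 ≠ 0} =>
        h (p : X × Y) ≠ (0, 0) ∧ (q : X × Y) = h (p : X × Y)))) =
      Nat.card {x : X // x ≠ 0} + Nat.card {y : Y // y ≠ 0} - 1 :=
  smash_tree_tree_components_general f g hfnil hgnil hXconn hYconn h hh
end
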